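/- For all k, k' ≥ 1: ρ^(k)(p_k) = k and ρ^(k)(p_{k'}) = 0 whenever k' ≠ k, where p_m is the power sum symmetric function and ρ^(k) is defined by ρ^(1) = ξ and ρ^(k+1) = [ρ^(k), ∇]/k. -/

import Mathlib

/-- `Covers μ lam` : `μ` is obtained from `lam` by deleting a single box. -/
def Covers (mu lam : YoungDiagram) : Prop :=
  mu.cells ⊆ lam.cells ∧ lam.cells.card = mu.cells.card + 1

/-- The sum of the contents `j - i` of the boxes of `lam` that are not in `mu`. -/
def remContent (mu lam : YoungDiagram) : ℤ :=
  ∑ c ∈ lam.cells \ mu.cells, ((c.2 : ℤ) - (c.1 : ℤ))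

instance (mu lam : YoungDiagram) : Decidable (Covers mu lam) := by
  unfold Covers; infer_instance

instance : DecidableEq YoungDiagram :=
  fun a b => decidable_of_iff (a.cells = b.cells) (YoungDiagram.ext_iff).symm
/-- The one-row Young diagram `(k)`. -/
def rowYD (k : ℕ) : YoungDiagram := YoungDiagram.ofRowLens [k] (List.sortedGE_iff_pairwise.mpr (List.pairwise_singleton _ _))

/-- The hook-shaped Young diagram `(r, 1^a)` (for `r ≥ 1`). -/
def hookYD (r a : ℕ) : YoungDiagram where
  cells := ((Finset.range r).image fun j => (0, j)) ∪
    ((Finset.range (a + 1)).image fun i => (i, 0))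
  isLowerSet := by
    intro x y hxy hy
    obtain ⟨h1, h2⟩ : y.1 ≤ x.1 ∧ y.2 ≤ x.2 := Prod.le_def.mp hxy
    simp only [Finset.coe_union, Finset.coe_image, Finset.coe_range, Set.mem_union,
      Set.mem_image, Set.mem_Iio] at hy ⊢
    rcases hy with ⟨j, hj, hje⟩ | ⟨i, hi, hie⟩
    · have hx1 : x.1 = 0 := by rw [← hje]
      have hx2 : x.2 = j := by rw [← hje]
      left
      exact ⟨y.2, by omega, by
        have hy1 : y.1 = 0 := by omega
        rw [Prod.ext_iff]; exact ⟨hy1.symm, rfl⟩⟩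
    · have hx1 : x.1 = i := by rw [← hie]
      have hx2 : x.2 = 0 := by rw [← hie]
      right
      exact ⟨y.1, by omega, by
        have hy2 : y.2 = 0 := by omega
        rw [Prod.ext_iff]; exact ⟨rfl, hy2.symm⟩⟩

/-- `mu / lam` is a horizontal strip: no two of its boxes lie in the same column. -/
def IsHStrip (lam mu : YoungDiagram) : Prop :=
  lam.cells ⊆ mu.cells ∧ ∀ c ∈ mu.cells, c ∉ lam.cells → (c.1 + 1, c.2) ∉ mu.cells

instance (lam mu : YoungDiagram) : Decidable (IsHStrip lam mu) := by
  unfold IsHStrip; infer_instance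

/-- The bosonic operators: `rhoOp xi nabla n` is `ρ⁽ⁿ⁺¹⁾`, defined by `ρ⁽¹⁾ = ξ` and
`ρ⁽ᵏ⁺¹⁾ = (ρ⁽ᵏ⁾∇ - ∇ρ⁽ᵏ⁾)/k`. -/
noncomputable def rhoOp {L : Type*} [CommRing L] [Algebra ℚ L]
    (xi nabla : Module.End ℚ L) : ℕ → Module.End ℚ L
  | 0 => xi
  | n + 1 => ((n : ℚ) + 1)⁻¹ • (rhoOp xi nabla n * nabla - nabla * rhoOp xi nabla n)

/-- The power sum symmetric function `p_k`, via its expansion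
`p_k = Σ_{a=0}^{k-1} (-1)^a s_{(k-a, 1^a)}` into hook Schur functions. -/
noncomputable def pSym {L : Type*} [CommRing L] [Algebra ℚ L]
    (s : Module.Basis YoungDiagram ℚ L) (k : ℕ) : L :=
  ∑ a ∈ Finset.range k, ((-1 : ℚ) ^ a) • s (hookYD (k - a) a)


section Aux

lemma mem_hookYD {r a : ℕ} {c : ℕ × ℕ} :
    c ∈ hookYD r a ↔ (c.1 = 0 ∧ c.2 < r) ∨ (c.2 = 0 ∧ c.1 < a + 1) := by
  obtain ⟨x, y⟩ := c
  simp only [← YoungDiagram.mem_cells, hookYD, YoungDiagram.mem_mk, Finset.mem_union, Finset.mem_image,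
    Finset.mem_range, Prod.mk.injEq]
  constructor
  · rintro (⟨j, hj, h1, h2⟩ | ⟨i, hi, h1, h2⟩) <;> omega
  · rintro (⟨h1, h2⟩ | ⟨h1, h2⟩)
    · exact Or.inl ⟨y, h2, h1.symm, rfl⟩
    · exact Or.inr ⟨x, h2, rfl, h1.symm⟩

lemma card_hookYD {r a : ℕ} (hr : 1 ≤ r) : (hookYD r a).cells.card = r + a := by
  have h := Finset.card_union_add_card_inter
    ((Finset.range r).image fun j => ((0 : ℕ), j))
    ((Finset.range (a + 1)).image fun i => (i, (0 : ℕ)))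
  have h1 : ((Finset.range r).image fun j => ((0:ℕ), j)).card = r := by
    rw [Finset.card_image_of_injective _ (fun x y h => by simpa using h)]; simp
  have h2 : ((Finset.range (a+1)).image fun i => (i, (0:ℕ))).card = a + 1 := by
    rw [Finset.card_image_of_injective _ (fun x y h => by simpa using h)]; simp
  have h3 : ((Finset.range r).image fun j => ((0:ℕ), j)) ∩
      ((Finset.range (a+1)).image fun i => (i, (0:ℕ))) = {((0:ℕ),(0:ℕ))} := by
    ext ⟨x, y⟩
    simp only [Finset.mem_inter, Finset.mem_image, Finset.mem_range, Prod.mk.injEq,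
      Finset.mem_singleton]
    constructor
    · rintro ⟨⟨j, hj, h1, h2⟩, ⟨i, hi, h3, h4⟩⟩; omega
    · rintro ⟨hx, hy⟩; exact ⟨⟨y, by omega, by omega, rfl⟩, ⟨x, by omega, rfl, by omega⟩⟩
  rw [h1, h2, h3] at h
  have : (hookYD r a).cells.card = (((Finset.range r).image fun j => ((0:ℕ), j)) ∪
      ((Finset.range (a+1)).image fun i => (i, (0:ℕ)))).card := rfl
  rw [this]
  simp only [Finset.card_singleton] at h
  omega

lemma hook_ne {r a : ℕ} (a' : ℕ) (hr : 2 ≤ r) : hookYD (r-1) a ≠ hookYD r a' := by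
  intro h
  have h1 : ((0:ℕ), r-1) ∈ hookYD r a' := mem_hookYD.mpr (Or.inl ⟨rfl, by omega⟩)
  rw [← h] at h1
  rcases mem_hookYD.mp h1 with ⟨_, h2⟩ | ⟨h2, _⟩ <;> simp at h2 <;> omega

lemma covers_hook_iff {r a : ℕ} (hr : 1 ≤ r) (mu : YoungDiagram) :
    Covers mu (hookYD r a) ↔
      (2 ≤ r ∧ mu = hookYD (r-1) a) ∨ (1 ≤ a ∧ mu = hookYD r (a-1)) ∨
      (r = 1 ∧ a = 0 ∧ mu = ⊥) := by
  constructor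
  · rintro ⟨hsub, hcard⟩
    have hd : ((hookYD r a).cells \ mu.cells).card = 1 := by
      rw [Finset.card_sdiff_of_subset hsub]; omega
    obtain ⟨c, hc⟩ := Finset.card_eq_one.mp hd
    have hcl : c ∈ hookYD r a := by
      have : c ∈ (hookYD r a).cells \ mu.cells := hc ▸ Finset.mem_singleton_self c
      exact (Finset.mem_sdiff.mp this).1
    have hcm : c ∉ mu.cells := by
      have : c ∈ (hookYD r a).cells \ mu.cells := hc ▸ Finset.mem_singleton_self c
      exact (Finset.mem_sdiff.mp this).2
    have hmu : ∀ x : ℕ × ℕ, x ∈ mu ↔ x ∈ hookYD r a ∧ x ≠ c := by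
      intro x
      constructor
      · intro hx
        refine ⟨hsub hx, fun h => hcm (h ▸ hx)⟩
      · rintro ⟨hx, hne⟩
        by_contra hxm
        have : x ∈ (hookYD r a).cells \ mu.cells := Finset.mem_sdiff.mpr ⟨hx, hxm⟩
        rw [hc, Finset.mem_singleton] at this
        exact hne this
    have hcor : c = (0, r-1) ∨ c = (a, 0) := by
      rcases mem_hookYD.mp hcl with ⟨h1, h2⟩ | ⟨h1, h2⟩
      · by_cases hc2 : c.2 = r - 1
        · left; exact Prod.ext h1 hc2
        · exfalso
          have hmem : (0, c.2 + 1) ∈ mu := by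
            rw [hmu]
            refine ⟨mem_hookYD.mpr (Or.inl ⟨rfl, by omega⟩), ?_⟩
            intro h; rw [Prod.ext_iff] at h; omega
          have : (c.1, c.2) ∈ mu := mu.up_left_mem (by omega) (by omega) hmem
          exact hcm this
      · by_cases hc1 : c.1 = a
        · right; exact Prod.ext hc1 h1
        · exfalso
          have hmem : (c.1 + 1, 0) ∈ mu := by
            rw [hmu]
            refine ⟨mem_hookYD.mpr (Or.inr ⟨rfl, by omega⟩), ?_⟩
            intro h; rw [Prod.ext_iff] at h; omega
          have : (c.1, c.2) ∈ mu := mu.up_left_mem (by omega) (by omega) hmem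
          exact hcm this
    have hbot : c = (0,0) → r = 1 ∧ a = 0 ∧ mu = ⊥ := by
      intro hcz
      have hr1 : r = 1 := by
        by_contra hr2
        have hmem : (0, 1) ∈ mu := by
          rw [hmu]
          refine ⟨mem_hookYD.mpr (Or.inl ⟨rfl, by omega⟩), ?_⟩
          intro h; rw [hcz, Prod.ext_iff] at h; omega
        have : (0, 0) ∈ mu := mu.up_left_mem le_rfl (by omega) hmem
        exact hcm (hcz ▸ this)
      have ha0 : a = 0 := by
        by_contra ha
        have hmem : (1, 0) ∈ mu := by
          rw [hmu]
          refine ⟨mem_hookYD.mpr (Or.inr ⟨rfl, by omega⟩), ?_⟩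
          intro h; rw [hcz, Prod.ext_iff] at h; omega
        have : (0, 0) ∈ mu := mu.up_left_mem (by omega) le_rfl hmem
        exact hcm (hcz ▸ this)
      refine ⟨hr1, ha0, ?_⟩
      ext ⟨x, y⟩
      simp only [YoungDiagram.cells_bot, Finset.notMem_empty, iff_false,
        YoungDiagram.mem_cells] at *
      rw [hmu]
      rintro ⟨hx, hne⟩
      rcases mem_hookYD.mp hx with ⟨h1, h2⟩ | ⟨h1, h2⟩ <;>
        [skip; skip] <;>
        · apply hne; rw [hcz, Prod.ext_iff]; constructor <;> simp <;> omega
    rcases hcor with hcz | hcz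
    · by_cases hr2 : 2 ≤ r
      · left
        refine ⟨hr2, ?_⟩
        ext ⟨x, y⟩
        simp only [YoungDiagram.mem_cells]
        rw [hmu, hcz]
        rw [mem_hookYD, mem_hookYD]
        constructor
        · rintro ⟨h1, h2⟩
          simp only [ne_eq, Prod.mk.injEq, not_and] at h2
          rcases h1 with ⟨ha, hb⟩ | ⟨ha, hb⟩ <;> simp at * <;> omega
        · rintro (⟨ha, hb⟩ | ⟨ha, hb⟩)
          · exact ⟨Or.inl ⟨ha, by omega⟩,
              by simp only [ne_eq, Prod.mk.injEq, not_and]; simp at *; omega⟩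
          · exact ⟨Or.inr ⟨ha, hb⟩,
              by simp only [ne_eq, Prod.mk.injEq, not_and]; simp at *; omega⟩
      · right; right
        exact hbot (by rw [hcz]; congr 1; omega)
    · by_cases ha1 : 1 ≤ a
      · right; left
        refine ⟨ha1, ?_⟩
        ext ⟨x, y⟩
        simp only [YoungDiagram.mem_cells]
        rw [hmu, hcz]
        rw [mem_hookYD, mem_hookYD]
        constructor
        · rintro ⟨h1, h2⟩
          simp only [ne_eq, Prod.mk.injEq, not_and] at h2
          rcases h1 with ⟨ha, hb⟩ | ⟨ha, hb⟩ <;> simp at * <;> omega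
        · rintro (⟨ha, hb⟩ | ⟨ha, hb⟩)
          · exact ⟨Or.inl ⟨ha, hb⟩,
              by simp only [ne_eq, Prod.mk.injEq, not_and]; simp at *; omega⟩
          · exact ⟨Or.inr ⟨ha, by omega⟩,
              by simp only [ne_eq, Prod.mk.injEq, not_and]; simp at *; omega⟩
      · right; right
        exact hbot (by rw [hcz]; congr 1; omega)
  · rintro (⟨hr2, rfl⟩ | ⟨ha1, rfl⟩ | ⟨hr1, ha0, rfl⟩)
    · constructor
      · intro x hx
        rw [YoungDiagram.mem_cells, mem_hookYD] at *
        rcases hx with ⟨h1, h2⟩ | h; exacts [Or.inl ⟨h1, by omega⟩, Or.inr h]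
      · rw [card_hookYD hr, card_hookYD (by omega : 1 ≤ r - 1)]; omega
    · constructor
      · intro x hx
        rw [YoungDiagram.mem_cells, mem_hookYD] at *
        rcases hx with h | ⟨h1, h2⟩; exacts [Or.inl h, Or.inr ⟨h1, by omega⟩]
      · rw [card_hookYD hr, card_hookYD hr]; omega
    · constructor
      · intro x hx; simp [YoungDiagram.cells_bot] at hx
      · rw [card_hookYD hr]; simp [YoungDiagram.cells_bot]; omega

lemma remContent_arm {r a : ℕ} (hr : 2 ≤ r) :
    remContent (hookYD (r-1) a) (hookYD r a) = (r : ℤ) - 1 := by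
  have h : (hookYD r a).cells \ (hookYD (r-1) a).cells = {((0:ℕ), r-1)} := by
    ext ⟨x, y⟩
    simp only [Finset.mem_sdiff, YoungDiagram.mem_cells, Finset.mem_singleton,
      mem_hookYD, Prod.mk.injEq]
    constructor
    · rintro ⟨h1, h2⟩
      rcases h1 with ⟨ha, hb⟩ | ⟨ha, hb⟩ <;> simp at * <;> omega
    · rintro ⟨rfl, rfl⟩
      refine ⟨Or.inl ⟨rfl, by omega⟩, ?_⟩
      simp; omega
  rw [remContent, h, Finset.sum_singleton]
  push_cast; omega

lemma remContent_leg {r a : ℕ} (hr : 1 ≤ r) (ha : 1 ≤ a) :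
    remContent (hookYD r (a-1)) (hookYD r a) = -(a : ℤ) := by
  have h : (hookYD r a).cells \ (hookYD r (a-1)).cells = {(a, (0:ℕ))} := by
    ext ⟨x, y⟩
    simp only [Finset.mem_sdiff, YoungDiagram.mem_cells, Finset.mem_singleton,
      mem_hookYD, Prod.mk.injEq]
    constructor
    · rintro ⟨h1, h2⟩
      rcases h1 with ⟨ha', hb⟩ | ⟨ha', hb⟩ <;> simp at * <;> omega
    · rintro ⟨rfl, rfl⟩
      refine ⟨Or.inr ⟨rfl, by omega⟩, ?_⟩
      simp; omega
  rw [remContent, h, Finset.sum_singleton]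
  push_cast; omega

lemma remContent_bot : remContent ⊥ (hookYD 1 0) = 0 := by
  have h : (hookYD 1 0).cells \ (⊥ : YoungDiagram).cells = {((0:ℕ), (0:ℕ))} := by
    ext ⟨x, y⟩
    simp only [Finset.mem_sdiff, YoungDiagram.mem_cells, Finset.mem_singleton,
      mem_hookYD, Prod.mk.injEq, YoungDiagram.cells_bot, Finset.notMem_empty,
      not_false_iff, and_true]
    constructor
    · rintro (⟨ha, hb⟩ | ⟨ha, hb⟩) <;> omega
    · rintro ⟨rfl, rfl⟩; exact Or.inl ⟨rfl, by omega⟩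
  rw [remContent, h, Finset.sum_singleton]
  simp

lemma not_covers_bot (mu : YoungDiagram) : ¬ Covers mu ⊥ := by
  rintro ⟨_, hcard⟩
  simp [YoungDiagram.cells_bot] at hcard

variable {L : Type*} [CommRing L] [Algebra ℚ L]

lemma xi_hook (s : Module.Basis YoungDiagram ℚ L) (hone : s (⊥ : YoungDiagram) = 1)
    (xi : Module.End ℚ L)
    (hxi : ∀ lam mu : YoungDiagram,
      s.repr (xi (s lam)) mu = if Covers mu lam then 1 else 0)
    {r a : ℕ} (hr : 1 ≤ r) :
    xi (s (hookYD r a)) =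
      (if 2 ≤ r then s (hookYD (r-1) a) else 0) +
      (if 1 ≤ a then s (hookYD r (a-1)) else 0) +
      (if r = 1 ∧ a = 0 then (1:L) else 0) := by
  rw [show (1:L) = s ⊥ from hone.symm]
  apply s.repr.injective
  ext mu
  rw [map_add, map_add, Finsupp.add_apply, Finsupp.add_apply, hxi,
    apply_ite s.repr, apply_ite s.repr, apply_ite s.repr, map_zero,
    Module.Basis.repr_self, Module.Basis.repr_self, Module.Basis.repr_self]
  simp only [covers_hook_iff hr mu]
  by_cases hD : (2 ≤ r ∧ mu = hookYD (r-1) a) ∨ (1 ≤ a ∧ mu = hookYD r (a-1)) ∨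
      (r = 1 ∧ a = 0 ∧ mu = ⊥)
  · rw [if_pos hD]
    rcases hD with ⟨h2, rfl⟩ | ⟨h4, rfl⟩ | ⟨h6, h7, rfl⟩
    · rw [if_pos h2, if_neg (by omega : ¬(r = 1 ∧ a = 0))]
      rw [Finsupp.single_eq_same]
      have : (if 1 ≤ a then (Finsupp.single (hookYD r (a-1)) (1:ℚ)) else 0)
          (hookYD (r-1) a) = 0 := by
        split_ifs with h
        · exact Finsupp.single_eq_of_ne (fun hh => (hook_ne (a-1) h2) hh)
        · rfl
      rw [this]; simp
    · rw [if_pos h4, if_neg (by omega : ¬(r = 1 ∧ a = 0))]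
      rw [Finsupp.single_eq_same]
      have : (if 2 ≤ r then (Finsupp.single (hookYD (r-1) a) (1:ℚ)) else 0)
          (hookYD r (a-1)) = 0 := by
        split_ifs with h
        · exact Finsupp.single_eq_of_ne (hook_ne (a-1) h).symm
        · rfl
      rw [this]; simp
    · rw [if_neg (by omega : ¬2 ≤ r), if_neg (by omega : ¬1 ≤ a),
        if_pos ⟨h6, h7⟩, Finsupp.single_eq_same]
      simp
  · rw [if_neg hD]
    push_neg at hD
    obtain ⟨hD1, hD2, hD3⟩ := hD
    have e1 : (if 2 ≤ r then (Finsupp.single (hookYD (r-1) a) (1:ℚ)) else 0) mu = 0 := by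
      split_ifs with h
      · exact Finsupp.single_eq_of_ne (fun hh => (hD1 h) hh)
      · rfl
    have e2 : (if 1 ≤ a then (Finsupp.single (hookYD r (a-1)) (1:ℚ)) else 0) mu = 0 := by
      split_ifs with h
      · exact Finsupp.single_eq_of_ne (fun hh => (hD2 h) hh)
      · rfl
    have e3 : (if r = 1 ∧ a = 0 then (Finsupp.single (⊥ : YoungDiagram) (1:ℚ)) else 0)
        mu = 0 := by
      split_ifs with h
      · exact Finsupp.single_eq_of_ne (fun hh => (hD3 h.1 h.2) hh)
      · rfl
    rw [e1, e2, e3]; ring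

lemma nabla_hook (s : Module.Basis YoungDiagram ℚ L)
    (nabla : Module.End ℚ L)
    (hnabla : ∀ lam mu : YoungDiagram,
      s.repr (nabla (s lam)) mu =
        if Covers mu lam then (remContent mu lam : ℚ) else 0)
    {r a : ℕ} (hr : 1 ≤ r) :
    nabla (s (hookYD r a)) =
      (if 2 ≤ r then ((r:ℚ) - 1) • s (hookYD (r-1) a) else 0) +
      (if 1 ≤ a then (-(a:ℚ)) • s (hookYD r (a-1)) else 0) := by
  apply s.repr.injective
  ext mu
  rw [map_add, Finsupp.add_apply, hnabla,
    apply_ite s.repr, apply_ite s.repr, map_zero, map_smul, map_smul,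
    Module.Basis.repr_self, Module.Basis.repr_self]
  simp only [covers_hook_iff hr mu]
  by_cases hD : (2 ≤ r ∧ mu = hookYD (r-1) a) ∨ (1 ≤ a ∧ mu = hookYD r (a-1)) ∨
      (r = 1 ∧ a = 0 ∧ mu = ⊥)
  · rw [if_pos hD]
    rcases hD with ⟨h2, rfl⟩ | ⟨h4, rfl⟩ | ⟨h6, h7, rfl⟩
    · rw [if_pos h2, remContent_arm h2]
      rw [Finsupp.smul_apply, Finsupp.single_eq_same]
      have : (if 1 ≤ a then (-(a:ℚ)) • (Finsupp.single (hookYD r (a-1)) (1:ℚ)) else 0)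
          (hookYD (r-1) a) = 0 := by
        split_ifs with h
        · rw [Finsupp.smul_apply,
            Finsupp.single_eq_of_ne (fun hh => (hook_ne (a-1) h2) hh)]
          simp
        · rfl
      rw [this]
      push_cast; simp [smul_eq_mul]
    · rw [if_pos h4, remContent_leg hr h4]
      rw [Finsupp.smul_apply, Finsupp.single_eq_same]
      have : (if 2 ≤ r then ((r:ℚ) - 1) • (Finsupp.single (hookYD (r-1) a) (1:ℚ)) else 0)
          (hookYD r (a-1)) = 0 := by
        split_ifs with h
        · rw [Finsupp.smul_apply, Finsupp.single_eq_of_ne (hook_ne (a-1) h).symm]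
          simp
        · rfl
      rw [this]
      push_cast; simp [smul_eq_mul]
    · rw [if_neg (by omega : ¬2 ≤ r), if_neg (by omega : ¬1 ≤ a)]
      subst h6; subst h7
      rw [remContent_bot]
      simp
  · rw [if_neg hD]
    push_neg at hD
    obtain ⟨hD1, hD2, _⟩ := hD
    have e1 : (if 2 ≤ r then ((r:ℚ) - 1) • (Finsupp.single (hookYD (r-1) a) (1:ℚ)) else 0)
        mu = 0 := by
      split_ifs with h
      · rw [Finsupp.smul_apply, Finsupp.single_eq_of_ne (fun hh => (hD1 h) hh)]
        simp
      · rfl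
    have e2 : (if 1 ≤ a then (-(a:ℚ)) • (Finsupp.single (hookYD r (a-1)) (1:ℚ)) else 0)
        mu = 0 := by
      split_ifs with h
      · rw [Finsupp.smul_apply, Finsupp.single_eq_of_ne (fun hh => (hD2 h) hh)]
        simp
      · rfl
    rw [e1, e2]; ring

lemma nabla_one (s : Module.Basis YoungDiagram ℚ L) (hone : s (⊥ : YoungDiagram) = 1)
    (nabla : Module.End ℚ L)
    (hnabla : ∀ lam mu : YoungDiagram,
      s.repr (nabla (s lam)) mu =
        if Covers mu lam then (remContent mu lam : ℚ) else 0) :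
    nabla (1 : L) = 0 := by
  rw [← hone]
  apply s.repr.injective
  ext mu
  rw [hnabla, map_zero, if_neg (not_covers_bot mu)]
  rfl

lemma xi_pSym (s : Module.Basis YoungDiagram ℚ L) (hone : s (⊥ : YoungDiagram) = 1)
    (xi : Module.End ℚ L)
    (hxi : ∀ lam mu : YoungDiagram,
      s.repr (xi (s lam)) mu = if Covers mu lam then 1 else 0)
    (k : ℕ) :
    xi (pSym s k) = if k = 1 then (1:L) else 0 := by
  cases k with
  | zero => simp [pSym]
  | succ m =>
    rw [pSym, map_sum]
    have step : ∀ a ∈ Finset.range (m+1),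
        xi (((-1:ℚ)^a) • s (hookYD (m+1-a) a)) =
          (if a < m then ((-1:ℚ)^a) • s (hookYD (m-a) a) else 0)
          + (((-1:ℚ)^a) • if 1 ≤ a then s (hookYD (m+1-a) (a-1)) else 0)
          + (((-1:ℚ)^a) • if m+1-a = 1 ∧ a = 0 then (1:L) else 0) := by
      intro a ha
      rw [Finset.mem_range] at ha
      rw [map_smul, xi_hook s hone xi hxi (by omega : 1 ≤ m+1-a), smul_add, smul_add]
      congr 1
      congr 1
      rw [smul_ite, smul_zero]
      by_cases hc : 2 ≤ m+1-a
      · rw [if_pos hc, if_pos (by omega : a < m),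
          (by omega : m + 1 - a - 1 = m - a)]
      · rw [if_neg hc, if_neg (by omega : ¬ a < m)]
    rw [Finset.sum_congr rfl step, Finset.sum_add_distrib, Finset.sum_add_distrib]
    have p1 : ∑ a ∈ Finset.range (m+1),
        (if a < m then ((-1:ℚ)^a) • s (hookYD (m-a) a) else 0) = pSym s m := by
      rw [Finset.sum_range_succ, if_neg (lt_irrefl m), add_zero, pSym]
      apply Finset.sum_congr rfl
      intro a ha
      rw [Finset.mem_range] at ha
      rw [if_pos ha]
    have p2 : ∑ a ∈ Finset.range (m+1),
        (((-1:ℚ)^a) • if 1 ≤ a then s (hookYD (m+1-a) (a-1)) else 0) =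
        - pSym s m := by
      rw [Finset.sum_range_succ']
      simp only [if_neg (by omega : ¬ (1:ℕ) ≤ 0), smul_zero, add_zero]
      rw [pSym, ← Finset.sum_neg_distrib]
      apply Finset.sum_congr rfl
      intro i hi
      rw [if_pos (by omega : 1 ≤ i + 1), (by omega : m + 1 - (i+1) = m - i),
        (by omega : i + 1 - 1 = i), pow_succ]
      rw [mul_smul]
      simp
    have p3 : ∑ a ∈ Finset.range (m+1),
        (((-1:ℚ)^a) • if m+1-a = 1 ∧ a = 0 then (1:L) else 0) =
        if m + 1 = 1 then (1:L) else 0 := by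
      rw [Finset.sum_range_succ']
      have z : ∀ i ∈ Finset.range m,
          (((-1:ℚ)^(i+1)) • if m+1-(i+1) = 1 ∧ i+1 = 0 then (1:L) else 0) = 0 := by
        intro i hi
        rw [if_neg (by omega : ¬ (m+1-(i+1) = 1 ∧ i+1 = 0)), smul_zero]
      rw [Finset.sum_congr rfl z, Finset.sum_const_zero, zero_add, pow_zero, one_smul]
      by_cases hm : m = 0
      · rw [if_pos (by omega), if_pos (by omega)]
      · rw [if_neg (by omega), if_neg (by omega)]
    rw [p1, p2, p3]
    abel

lemma nabla_pSym (s : Module.Basis YoungDiagram ℚ L)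
    (nabla : Module.End ℚ L)
    (hnabla : ∀ lam mu : YoungDiagram,
      s.repr (nabla (s lam)) mu =
        if Covers mu lam then (remContent mu lam : ℚ) else 0)
    (k : ℕ) :
    nabla (pSym s k) = ((k:ℚ)) • pSym s (k-1) := by
  cases k with
  | zero => simp [pSym]
  | succ m =>
    rw [pSym, map_sum]
    have step : ∀ a ∈ Finset.range (m+1),
        nabla (((-1:ℚ)^a) • s (hookYD (m+1-a) a)) =
          (((-1:ℚ)^a * ((m-a : ℕ) : ℚ)) • s (hookYD (m-a) a))
          + (((-1:ℚ)^a) • if 1 ≤ a then (-(a:ℚ)) • s (hookYD (m+1-a) (a-1)) else 0) := by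
      intro a ha
      rw [Finset.mem_range] at ha
      rw [map_smul, nabla_hook s nabla hnabla (by omega : 1 ≤ m+1-a), smul_add]
      congr 1
      rw [smul_ite, smul_zero]
      by_cases hc : 2 ≤ m+1-a
      · rw [if_pos hc, (by omega : m + 1 - a - 1 = m - a), smul_smul]
        congr 1
        have e : m + 1 - a = (m - a) + 1 := by omega
        rw [e]
        push_cast
        ring
      · rw [if_neg hc, (by omega : m - a = 0)]
        simp
    rw [Finset.sum_congr rfl step, Finset.sum_add_distrib]
    have p1 : ∑ a ∈ Finset.range (m+1),
        (((-1:ℚ)^a * ((m-a : ℕ) : ℚ)) • s (hookYD (m-a) a)) =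
        ∑ a ∈ Finset.range m, (((-1:ℚ)^a * ((m-a : ℕ) : ℚ)) • s (hookYD (m-a) a)) := by
      rw [Finset.sum_range_succ, Nat.sub_self]
      simp
    have p2 : ∑ a ∈ Finset.range (m+1),
        (((-1:ℚ)^a) • if 1 ≤ a then (-(a:ℚ)) • s (hookYD (m+1-a) (a-1)) else 0) =
        ∑ i ∈ Finset.range m, (((-1:ℚ)^i * ((i:ℚ)+1)) • s (hookYD (m-i) i)) := by
      rw [Finset.sum_range_succ']
      simp only [if_neg (by omega : ¬ (1:ℕ) ≤ 0), smul_zero, add_zero]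
      apply Finset.sum_congr rfl
      intro i hi
      rw [if_pos (by omega : 1 ≤ i + 1), (by omega : m + 1 - (i+1) = m - i),
        (by omega : i + 1 - 1 = i), smul_smul, pow_succ]
      congr 1
      push_cast
      ring
    rw [p1, p2, ← Finset.sum_add_distrib]
    rw [(by omega : m + 1 - 1 = m), pSym, Finset.smul_sum]
    apply Finset.sum_congr rfl
    intro a ha
    rw [Finset.mem_range] at ha
    rw [← add_smul, smul_smul]
    congr 1
    have e : ((m - a : ℕ) : ℚ) = ((m : ℚ) - (a:ℚ)) := by
      have h' : (m - a : ℕ) + a = m := by omega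
      have h'' := congrArg (fun n : ℕ => (n : ℚ)) h'
      push_cast at h''
      linarith
    rw [e]
    push_cast
    ring

lemma rho_claim (s : Module.Basis YoungDiagram ℚ L) (xi nabla : Module.End ℚ L)
    (hx : ∀ k, xi (pSym s k) = if k = 1 then (1:L) else 0)
    (hn : ∀ k, nabla (pSym s k) = ((k:ℚ)) • pSym s (k-1))
    (hn1 : nabla (1:L) = 0) :
    ∀ m k, rhoOp xi nabla m (pSym s k) = if k = m+1 then ((k:ℕ):L) else 0 := by
  intro m
  induction m with
  | zero =>
    intro k
    rw [show rhoOp xi nabla 0 = xi from rfl, hx]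
    by_cases hk : k = 1
    · subst hk; simp
    · rw [if_neg hk, if_neg (by omega)]
  | succ m ih =>
    intro k
    have hdef : rhoOp xi nabla (m+1) =
        ((m : ℚ) + 1)⁻¹ • (rhoOp xi nabla m * nabla - nabla * rhoOp xi nabla m) := rfl
    rw [hdef, LinearMap.smul_apply, LinearMap.sub_apply, Module.End.mul_apply,
      Module.End.mul_apply, hn, map_smul, ih, ih]
    have hcast : ∀ n : ℕ, ((n:ℕ) : L) = (n : ℚ) • (1 : L) := by
      intro n
      rw [Algebra.smul_def, mul_one, map_natCast]
    by_cases hk : k = m + 2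
    · subst hk
      rw [if_pos (by omega : m + 2 - 1 = m + 1), if_neg (by omega : ¬ m + 2 = m + 1),
        map_zero, sub_zero, hcast, hcast, smul_smul, smul_smul,
        if_pos rfl, (by omega : m + 2 - 1 = m + 1)]
      congr 1
      have h1 : ((m:ℚ) + 1) ≠ 0 := by positivity
      push_cast
      field_simp
    · rw [if_neg (by omega : ¬ k - 1 = m + 1), if_neg (by omega : ¬ k = m + 1 + 1)]
      by_cases hk2 : k = m + 1
      · rw [if_pos hk2, hcast, map_smul, hn1]
        simp
      · rw [if_neg hk2, map_zero, smul_zero, sub_zero, smul_zero]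

end Aux

/-- `ρ⁽ᵏ⁾(p_k) = k` and `ρ⁽ᵏ⁾(p_{k'}) = 0` for `k' ≠ k`. -/
theorem rho_on_powersums
    {L : Type*} [CommRing L] [Algebra ℚ L]
    (s : Module.Basis YoungDiagram ℚ L)
    (hone : s (⊥ : YoungDiagram) = 1)
    (hPieri : ∀ (k : ℕ) (lam mu : YoungDiagram),
      s.repr (s (rowYD k) * s lam) mu =
        if mu.cells.card = lam.cells.card + k ∧ IsHStrip lam mu then 1 else 0)
    (xi : Module.End ℚ L)
    (hxi : ∀ lam mu : YoungDiagram,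
      s.repr (xi (s lam)) mu = if Covers mu lam then 1 else 0)
    (nabla : Module.End ℚ L)
    (hnabla : ∀ lam mu : YoungDiagram,
      s.repr (nabla (s lam)) mu =
        if Covers mu lam then (remContent mu lam : ℚ) else 0)
    : ∀ k : ℕ, 1 ≤ k →
      rhoOp xi nabla (k - 1) (pSym s k) = (k : L) ∧
      ∀ k' : ℕ, 1 ≤ k' → k' ≠ k → rhoOp xi nabla (k - 1) (pSym s k') = 0 := by
  have hx := xi_pSym s hone xi hxi
  have hn := nabla_pSym s nabla hnabla
  have hn1 := nabla_one s hone nabla hnabla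
  have claim := rho_claim s xi nabla hx hn hn1
  intro k hk
  constructor
  · have h := claim (k-1) k
    rw [if_pos (by omega : k = (k-1) + 1)] at h
    exact h
  · intro k' hk' hne
    have h := claim (k-1) k'
    rwa [if_neg (by omega : ¬ k' = (k-1) + 1)] at h
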